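/- Let T be a tree with exactly one major vertex w of degree s ≥ 4, such that T - w consists of path components T_1, ..., T_s with the neighbor u_i of w in T_i an endpoint of T_i. Let λ = 2cos(iπ/(m+1)) with i, m+1 coprime, 1 ≤ i ≤ m. Suppose m(T_1, λ) = 0 and m(T_j, λ) = 1 with m(T_j - u_j, λ) = 0 for j = 2, ..., s. Then m(T, λ) = s - 2 = p(T) - 2. -/

import Mathlib

open scoped Classical

/-- Multiplicity of `lam` as an eigenvalue of a real symmetric matrix:
dimension of the kernel of `A - lam • 1`. -/
noncomputable def matMult {V : Type*} [Fintype V] [DecidableEq V]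
    (A : Matrix V V ℝ) (lam : ℝ) : ℕ :=
  Module.finrank ℝ (LinearMap.ker (Matrix.toLin' (A - lam • (1 : Matrix V V ℝ))))

/-- Adjacency matrix of a simple graph over ℝ. -/
noncomputable def adjM {V : Type*} [Fintype V] (G : SimpleGraph V) : Matrix V V ℝ :=
  fun i j => if G.Adj i j then 1 else 0

/-- Multiplicity of `lam` as an eigenvalue of the adjacency matrix of `G`. -/
noncomputable def gMult {V : Type*} [Fintype V] (G : SimpleGraph V) (lam : ℝ) : ℕ :=
  matMult (adjM G) lam

/-- Multiplicity of `lam` as an eigenvalue of the induced subgraph of `G` on `s`. -/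
noncomputable def sMult {V : Type*} [Fintype V] (G : SimpleGraph V) (s : Set V) (lam : ℝ) : ℕ :=
  gMult (G.induce s) lam

/-- Degree of a vertex, via the cardinality of its neighbor set. -/
noncomputable def deg {V : Type*} (G : SimpleGraph V) (v : V) : ℕ :=
  (G.neighborSet v).ncard

/-- Number of pendant (degree-1) vertices. -/
noncomputable def pendCount {V : Type*} (G : SimpleGraph V) : ℕ :=
  {v : V | deg G v = 1}.ncard

/-- Number of pendant vertices, with the paper's convention that a
single-vertex graph has `p = 2`. -/
noncomputable def pendCount' {V : Type*} (G : SimpleGraph V) : ℕ :=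
  if Nat.card V ≤ 1 then 2 else pendCount G

/-- A graph is (isomorphic to) a path graph. -/
def IsPathGraph {W : Type*} (H : SimpleGraph W) : Prop :=
  ∃ n : ℕ, Nonempty (H ≃g SimpleGraph.pathGraph n)

/-- The vertex sets (as subsets of `V`) of the connected components of `G - w`. -/
def compSupp {V : Type*} (G : SimpleGraph V) (w : V)
    (c : (G.induce {u | u ≠ w}).ConnectedComponent) : Set V :=
  Subtype.val '' c.supp

/-!
Each branch of `T - w` is a path attached to `w` at an end, so it contains exactly one leaf of
`T`, namely its far end; since `T` is a tree there are `deg w` branches.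

For the multiplicity, `λ`-eigenvectors of `T - w` split along the branches, so
`m(T - w) = s - 1`. A branch `T_j` with `j ≥ 2` carries an eigenvector `y` with
`y(u_j) ≠ 0`, since `m(T_j - u_j) = 0`; then `(A y)(w) = y(u_j) ≠ 0`. Comparing
`⟨y, A x⟩ = ⟨A y, x⟩` for an eigenvector `x` of `T` forces `x(w) = 0`, so the
`λ`-eigenspace of `T` is the kernel of the nonzero functional `x ↦ (A x)(w)` on that of
`T - w`, and `m(T) = m(T - w) - 1 = s - 2`.
-/

open Matrix Module

theorem finrank_inf_ker_add_one {K E : Type*} [Field K] [AddCommGroup E] [Module K E]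
    {p : Submodule K E} [FiniteDimensional K p] {f : E →ₗ[K] K} {y : E} (hy : y ∈ p)
    (hfy : f y ≠ 0) : finrank K (p ⊓ LinearMap.ker f : Submodule K E) + 1 = finrank K p := by
  have hf : f.domRestrict p ≠ 0 := fun h => hfy (by simpa using LinearMap.congr_fun h ⟨y, hy⟩)
  rw [← Module.Dual.finrank_ker_add_one_of_ne_zero hf, LinearMap.ker_domRestrict,
    ← Submodule.finrank_map_subtype_eq, Submodule.map_comap_subtype]

theorem mem_ker_toLin'_sub_smul_one {ι : Type*} [Fintype ι] [DecidableEq ι]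
    (B : Matrix ι ι ℝ) (lam : ℝ) (z : ι → ℝ) :
    z ∈ LinearMap.ker (toLin' (B - lam • 1)) ↔ ∀ i, (B *ᵥ z) i = lam * z i := by
  simp [funext_iff, sub_eq_zero]

section EigOn

variable {V : Type*} [Fintype V] (A : Matrix V V ℝ) (lam : ℝ)

/-- The `lam`-eigenspace of the principal submatrix of `A` on `S`, realised as vectors on `V`
vanishing off `S`. -/
def eigOn (S : Set V) : Submodule ℝ (V → ℝ) where
  carrier := {x | (∀ v ∉ S, x v = 0) ∧ ∀ v ∈ S, (A *ᵥ x) v = lam * x v}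
  add_mem' := by
    rintro x y ⟨hx0, hx⟩ ⟨hy0, hy⟩
    exact ⟨fun v hv => by simp [hx0 v hv, hy0 v hv],
      fun v hv => by simp [mulVec_add, hx v hv, hy v hv, mul_add]⟩
  zero_mem' := by simp
  smul_mem' := by
    rintro c x ⟨hx0, hx⟩
    exact ⟨fun v hv => by simp [hx0 v hv],
      fun v hv => by simp [mulVec_smul, hx v hv, mul_left_comm]⟩

variable {A lam}

theorem mem_eigOn {S : Set V} {x : V → ℝ} :
    x ∈ eigOn A lam S ↔ (∀ v ∉ S, x v = 0) ∧ ∀ v ∈ S, (A *ᵥ x) v = lam * x v :=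
  Iff.rfl

variable (A lam)

theorem eigOn_univ : eigOn A lam Set.univ = LinearMap.ker (toLin' (A - lam • 1)) := by
  ext x
  rw [mem_ker_toLin'_sub_smul_one]
  simp [mem_eigOn]

theorem submatrix_mulVec_of_eqOn_zero {S : Set V} {x : V → ℝ} (hx : ∀ v ∉ S, x v = 0)
    (i : S) : (A.submatrix Subtype.val Subtype.val *ᵥ fun j : S => x j) i = (A *ᵥ x) i := by
  simp only [mulVec, dotProduct, submatrix_apply]
  rw [← Fintype.sum_subtype_add_sum_subtype (· ∈ S), left_eq_add]
  exact Finset.sum_eq_zero fun j _ => by simp [hx j j.2]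

theorem matMult_submatrix (S : Set V) :
    matMult (A.submatrix (Subtype.val : S → V) (Subtype.val : S → V)) lam =
      finrank ℝ (eigOn A lam S) := by
  let r := (LinearMap.funLeft ℝ ℝ (Subtype.val : S → V)).comp (eigOn A lam S).subtype
  have hinj : Function.Injective r := by
    refine (injective_iff_map_eq_zero r).2 fun x hx => Subtype.ext (funext fun v => ?_)
    by_cases hv : v ∈ S
    · exact congrFun hx ⟨v, hv⟩
    · exact x.2.1 v hv
  have hrange : LinearMap.range r =
      LinearMap.ker
        (toLin' (A.submatrix (Subtype.val : S → V) (Subtype.val : S → V) - lam • 1)) := by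
    ext z
    rw [mem_ker_toLin'_sub_smul_one]
    constructor
    · rintro ⟨x, rfl⟩ i
      exact (submatrix_mulVec_of_eqOn_zero A x.2.1 i).trans (x.2.2 i i.2)
    · intro hz
      let x : V → ℝ := fun v => if h : v ∈ S then z ⟨v, h⟩ else 0
      have hx0 : ∀ v ∉ S, x v = 0 := fun v hv => dif_neg hv
      have hxz : (fun j : S => x j) = z := funext fun j => dif_pos j.2
      refine ⟨⟨x, hx0, fun v hv => ?_⟩, hxz⟩
      have := submatrix_mulVec_of_eqOn_zero A hx0 ⟨v, hv⟩
      rw [hxz, hz] at this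
      rw [← this, ← congrFun hxz ⟨v, hv⟩]
  rw [matMult, ← hrange, LinearMap.finrank_range_of_inj hinj]

section Partition

variable {ι : Type*} {P : ι → Set V}

theorem eigOn_le_eigOn_iUnion (hA : Pairwise fun i j => ∀ v ∈ P i, ∀ u ∈ P j, A v u = 0)
    (i : ι) : eigOn A lam (P i) ≤ eigOn A lam (⋃ j, P j) := by
  rintro x ⟨hx0, hx⟩
  refine ⟨fun v hv => hx0 v fun h => hv (Set.mem_iUnion_of_mem i h), fun v hv => ?_⟩
  by_cases hvi : v ∈ P i
  · exact hx v hvi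
  obtain ⟨j, hvj⟩ := Set.mem_iUnion.1 hv
  have hji : j ≠ i := by rintro rfl; exact hvi hvj
  rw [hx0 v hvi, mul_zero]
  refine Finset.sum_eq_zero fun u _ => ?_
  by_cases hu : u ∈ P i
  · simp [hA hji v hvj u hu]
  · simp [hx0 u hu]

theorem indicator_mem_eigOn (hA : Pairwise fun i j => ∀ v ∈ P i, ∀ u ∈ P j, A v u = 0)
    {x : V → ℝ} (hx : x ∈ eigOn A lam (⋃ j, P j)) (i : ι) :
    (P i).indicator x ∈ eigOn A lam (P i) := by
  refine ⟨fun v hv => Set.indicator_of_notMem hv x, fun v hv => ?_⟩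
  rw [Set.indicator_of_mem hv, ← hx.2 v (Set.mem_iUnion_of_mem i hv)]
  refine Finset.sum_congr rfl fun u _ => ?_
  by_cases hu : u ∈ P i
  · rw [Set.indicator_of_mem hu]
  rw [Set.indicator_of_notMem hu]
  by_cases hu' : u ∈ ⋃ j, P j
  · obtain ⟨j, huj⟩ := Set.mem_iUnion.1 hu'
    simp [hA (fun h : i = j => hu (h ▸ huj)) v hv u huj]
  · simp [hx.1 u hu']

variable [Fintype ι]

theorem sum_eigOn_apply_of_mem (hP : Pairwise fun i j => Disjoint (P i) (P j))
    (y : ∀ i, eigOn A lam (P i)) {i : ι} {v : V} (hv : v ∈ P i) :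
    ∑ j, (y j : V → ℝ) v = (y i : V → ℝ) v :=
  Finset.sum_eq_single i
    (fun j _ hji => (y j).2.1 v fun hvj => (hP hji).notMem_of_mem_left hvj hv)
    (fun h => absurd (Finset.mem_univ i) h)

theorem finrank_eigOn_iUnion (hP : Pairwise fun i j => Disjoint (P i) (P j))
    (hA : Pairwise fun i j => ∀ v ∈ P i, ∀ u ∈ P j, A v u = 0) :
    finrank ℝ (eigOn A lam (⋃ i, P i)) = ∑ i, finrank ℝ (eigOn A lam (P i)) := by
  let Φ : (∀ i, eigOn A lam (P i)) →ₗ[ℝ] eigOn A lam (⋃ i, P i) :=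
    LinearMap.codRestrict _ (∑ i, (eigOn A lam (P i)).subtype ∘ₗ LinearMap.proj i)
      fun y => by
        simpa using Submodule.sum_mem _ fun i _ => eigOn_le_eigOn_iUnion A lam hA i (y i).2
  have hΦ : ∀ y v, (Φ y : V → ℝ) v = ∑ i, (y i : V → ℝ) v := fun y v => by simp [Φ]
  have hinj : Function.Injective Φ := by
    refine (injective_iff_map_eq_zero Φ).2 fun y hy => funext fun i => Subtype.ext ?_
    funext v
    by_cases hv : v ∈ P i
    · rw [← sum_eigOn_apply_of_mem A lam hP y hv, ← hΦ, hy]; rfl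
    · exact (y i).2.1 v hv
  have hsurj : Function.Surjective Φ := by
    intro x
    refine ⟨fun i => ⟨_, indicator_mem_eigOn A lam hA x.2 i⟩,
      Subtype.ext (funext fun v => ?_)⟩
    rw [hΦ]
    by_cases hv : v ∈ ⋃ i, P i
    · obtain ⟨i, hvi⟩ := Set.mem_iUnion.1 hv
      rw [sum_eigOn_apply_of_mem A lam hP _ hvi]
      exact Set.indicator_of_mem hvi _
    · rw [x.2.1 v hv]
      exact Finset.sum_eq_zero fun i _ =>
        Set.indicator_of_notMem (fun h => hv (Set.mem_iUnion_of_mem i h)) _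
  rw [← (LinearEquiv.ofBijective Φ ⟨hinj, hsurj⟩).finrank_eq, Module.finrank_pi_fintype]

end Partition

theorem mem_eigOn_sdiff_singleton {S : Set V} {u : V} {y : V → ℝ} (hy : y ∈ eigOn A lam S)
    (hyu : y u = 0) : y ∈ eigOn A lam (S \ {u}) := by
  refine ⟨fun v hv => ?_, fun v hv => hy.2 v hv.1⟩
  by_cases hvu : v = u
  · rwa [hvu]
  · exact hy.1 v fun hvS => hv ⟨hvS, hvu⟩

theorem exists_mem_eigOn_apply_ne_zero {S : Set V} {u : V} (hS : eigOn A lam S ≠ ⊥)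
    (hSu : eigOn A lam (S \ {u}) = ⊥) : ∃ y ∈ eigOn A lam S, y u ≠ 0 := by
  obtain ⟨y, hy, hy0⟩ := (Submodule.ne_bot_iff _).1 hS
  refine ⟨y, hy, fun hyu => hy0 ?_⟩
  rw [← Submodule.mem_bot ℝ, ← hSu]
  exact mem_eigOn_sdiff_singleton A lam hy hyu

section Symmetric

variable {A lam} (hA : A.IsSymm) {w : V} {y : V → ℝ} (hy : y ∈ eigOn A lam {u | u ≠ w})
  (hyw : (A *ᵥ y) w ≠ 0)
include hA hy hyw

theorem apply_eq_zero_of_mem_eigOn_univ {x : V → ℝ} (hx : x ∈ eigOn A lam Set.univ) :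
    x w = 0 := by
  have hAx : A *ᵥ x = lam • x := funext fun v => hx.2 v trivial
  have hAy : A *ᵥ y = lam • y + Pi.single w ((A *ᵥ y) w) := by
    funext v
    by_cases hv : v = w
    · subst hv; simp [hy.1 v (fun h => h rfl)]
    · simp [hv, hy.2 v hv]
  have hsymm : y ⬝ᵥ (A *ᵥ x) = (A *ᵥ y) ⬝ᵥ x := by
    rw [dotProduct_mulVec, ← vecMul_transpose, hA.eq]
  rw [hAx, hAy, add_dotProduct, dotProduct_smul, smul_dotProduct, single_dotProduct,
    left_eq_add, mul_eq_zero] at hsymm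
  exact hsymm.resolve_left hyw

theorem eigOn_univ_eq_inf_ker :
    eigOn A lam Set.univ =
      eigOn A lam {u | u ≠ w} ⊓ LinearMap.ker (LinearMap.proj w ∘ₗ mulVecLin A) := by
  ext x
  simp only [Submodule.mem_inf, LinearMap.mem_ker, LinearMap.comp_apply, mulVecLin_apply,
    LinearMap.proj_apply]
  constructor
  · intro hx
    have hxw := apply_eq_zero_of_mem_eigOn_univ hA hy hyw hx
    refine ⟨⟨fun v hv => ?_, fun v _ => hx.2 v trivial⟩,
      by rw [hx.2 w trivial, hxw, mul_zero]⟩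
    rwa [of_not_not hv]
  · rintro ⟨hx, hxw⟩
    refine ⟨fun v hv => absurd trivial hv, fun v _ => ?_⟩
    by_cases hv : v = w
    · rw [hv, hxw, hx.1 w (fun h => h rfl), mul_zero]
    · exact hx.2 v hv

theorem finrank_eigOn_univ_add_one :
    finrank ℝ (eigOn A lam Set.univ) + 1 = finrank ℝ (eigOn A lam {u | u ≠ w}) := by
  rw [eigOn_univ_eq_inf_ker hA hy hyw]
  exact finrank_inf_ker_add_one hy hyw

end Symmetric

end EigOn

open SimpleGraph

section Components

variable {V : Type*} (T : SimpleGraph V) (w : V)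

theorem mem_compSupp_iff {c : (T.induce {u | u ≠ w}).ConnectedComponent} {v : V} (hv : v ≠ w) :
    v ∈ compSupp T w c ↔ (T.induce {u | u ≠ w}).connectedComponentMk ⟨v, hv⟩ = c := by
  simp [compSupp, ConnectedComponent.mem_supp_iff, hv]

theorem ne_of_mem_compSupp {c : (T.induce {u | u ≠ w}).ConnectedComponent} {v : V}
    (hv : v ∈ compSupp T w c) : v ≠ w := by
  obtain ⟨⟨v, hv⟩, -, rfl⟩ := hv
  exact hv

theorem mem_compSupp_of_adj {c : (T.induce {u | u ≠ w}).ConnectedComponent} {v u : V}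
    (hv : v ∈ compSupp T w c) (hvu : T.Adj v u) (hu : u ≠ w) : u ∈ compSupp T w c := by
  have hvw := ne_of_mem_compSupp T w hv
  rw [mem_compSupp_iff T w hvw] at hv
  rw [mem_compSupp_iff T w hu, ← hv]
  exact ConnectedComponent.sound (induce_adj.2 hvu).symm.reachable

theorem pairwise_disjoint_compSupp :
    Pairwise fun c c' : (T.induce {u | u ≠ w}).ConnectedComponent =>
      Disjoint (compSupp T w c) (compSupp T w c') := by
  intro c c' hcc'
  refine Set.disjoint_left.2 fun v hv hv' => hcc' ?_
  have hvw := ne_of_mem_compSupp T w hv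
  rw [mem_compSupp_iff T w hvw] at hv hv'
  rw [← hv, hv']

theorem iUnion_compSupp : ⋃ c, compSupp T w c = {u | u ≠ w} := by
  ext v
  rw [Set.mem_iUnion]
  exact ⟨fun ⟨c, hv⟩ => ne_of_mem_compSupp T w hv,
    fun hv => ⟨_, (mem_compSupp_iff T w hv).2 rfl⟩⟩

theorem exists_adj_mem_compSupp (hT : T.Connected)
    (c : (T.induce {u | u ≠ w}).ConnectedComponent) : ∃ u ∈ compSupp T w c, T.Adj w u := by
  obtain ⟨⟨v, hv⟩, rfl⟩ := c.exists_rep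
  obtain ⟨p, hp⟩ := (hT.preconnected w v).exists_isPath
  have hnil : ¬ p.Nil := fun h => hv (h.eq).symm
  -- the tail of a path from `w` avoids `w`, hence lies in `T - w`
  have htail : ∀ x ∈ p.tail.support, x ∈ {u | u ≠ w} := by
    rintro x hx rfl
    have := hp.support_nodup
    rw [← Walk.cons_support_tail hnil, List.nodup_cons] at this
    exact this.1 hx
  refine ⟨p.snd, (mem_compSupp_iff T w (htail _ p.tail.start_mem_support)).2 ?_, p.adj_snd hnil⟩
  exact ConnectedComponent.sound ⟨p.tail.induce _ htail⟩

theorem eq_of_adj_of_mem_compSupp (hT : T.IsAcyclic)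
    {c : (T.induce {u | u ≠ w}).ConnectedComponent} {u₁ u₂ : V}
    (hu₁ : u₁ ∈ compSupp T w c) (hu₂ : u₂ ∈ compSupp T w c)
    (ha₁ : T.Adj w u₁) (ha₂ : T.Adj w u₂) : u₁ = u₂ := by
  by_contra hne
  apply isBridge_iff.1 (isAcyclic_iff_forall_adj_isBridge.1 hT ha₁)
  let φ : T.induce {u | u ≠ w} →g T.deleteEdges {s(w, u₁)} :=
    ⟨Subtype.val, fun {a b} hab => by
      simpa [induce_adj.1 hab] using ⟨fun h => absurd h a.2, fun _ => b.2⟩⟩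
  rw [mem_compSupp_iff T w ha₂.ne'] at hu₂
  rw [mem_compSupp_iff T w ha₁.ne', ← hu₂] at hu₁
  have hw₂ : (T.deleteEdges {s(w, u₁)}).Adj w u₂ := by simp [ha₂, Ne.symm hne, ha₂.ne']
  exact hw₂.reachable.trans ((ConnectedComponent.exact hu₁.symm).map φ)

theorem existsUnique_adj_mem_compSupp (hT : T.IsTree)
    (c : (T.induce {u | u ≠ w}).ConnectedComponent) : ∃! u ∈ compSupp T w c, T.Adj w u := by
  obtain ⟨u, hu, hwu⟩ := exists_adj_mem_compSupp T w hT.1 c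
  exact ⟨u, ⟨hu, hwu⟩, fun u' ⟨hu', hwu'⟩ =>
    eq_of_adj_of_mem_compSupp T w hT.2 hu' hu hwu' hwu⟩

theorem ncard_eq_card_connectedComponent {X : Set V} (hX : ∀ x ∈ X, x ≠ w)
    (h : ∀ c, ∃! x ∈ compSupp T w c, x ∈ X) :
    X.ncard = Nat.card (T.induce {u | u ≠ w}).ConnectedComponent := by
  let f : X → (T.induce {u | u ≠ w}).ConnectedComponent :=
    fun x => (T.induce {u | u ≠ w}).connectedComponentMk ⟨x, hX x x.2⟩
  have hf : ∀ x : X, (x : V) ∈ compSupp T w (f x) := fun x => (mem_compSupp_iff T w _).2 rfl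
  have hbij : Function.Bijective f := by
    refine ⟨fun x x' hxx' => Subtype.ext ?_, fun c => ?_⟩
    · obtain ⟨_, _, huniq⟩ := h (f x)
      exact (huniq x ⟨hf x, x.2⟩).trans (huniq x' ⟨hxx' ▸ hf x', x'.2⟩).symm
    · obtain ⟨x, ⟨hxc, hxX⟩, -⟩ := h c
      exact ⟨⟨x, hxX⟩, (mem_compSupp_iff T w _).1 hxc⟩
  rw [← Nat.card_coe_set_eq, Nat.card_congr (Equiv.ofBijective f hbij)]

theorem deg_eq_card_connectedComponent (hT : T.IsTree) :
    deg T w = Nat.card (T.induce {u | u ≠ w}).ConnectedComponent :=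
  ncard_eq_card_connectedComponent T w (fun _ hx => (T.ne_of_adj hx).symm)
    (existsUnique_adj_mem_compSupp T w hT)

end Components

section Degrees

theorem deg_iso {V W : Type*} {G : SimpleGraph V} {G' : SimpleGraph W} (e : G ≃g G') (v : V) :
    deg G' (e v) = deg G v := by
  rw [deg, deg, ← Nat.card_coe_set_eq, ← Nat.card_coe_set_eq,
    Nat.card_congr (e.mapNeighborSet v)]

theorem deg_induce {V : Type*} (G : SimpleGraph V) {S : Set V} {v : V} (hv : v ∈ S) :
    deg (G.induce S) ⟨v, hv⟩ = (G.neighborSet v ∩ S).ncard := by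
  rw [deg, ← Set.ncard_image_of_injective _ Subtype.val_injective]
  congr 1
  ext u
  simp [and_comm]

theorem deg_pathGraph {n : ℕ} (i : Fin n) :
    deg (pathGraph n) i = (if i.1 + 1 < n then 1 else 0) + (if 0 < i.1 then 1 else 0) := by
  have hsplit : (pathGraph n).neighborSet i = {j | j.1 = i.1 + 1} ∪ {j | j.1 + 1 = i.1} := by
    ext j
    simp only [mem_neighborSet, pathGraph_adj, Set.mem_union, Set.mem_ofPred_eq]
    omega
  rw [deg, hsplit, Set.ncard_union_eq (Set.disjoint_left.2 fun j h₁ h₂ => by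
    rw [Set.mem_ofPred_eq] at h₁ h₂; omega)]
  have := i.2
  congr 1
  · split_ifs with h
    · convert Set.ncard_singleton (⟨i.1 + 1, h⟩ : Fin n)
      ext j
      simp [Fin.ext_iff]
    · convert Set.ncard_empty (Fin n)
      ext j
      simp only [Set.mem_ofPred_eq, Set.mem_empty_iff_false, iff_false]
      omega
  · split_ifs with h
    · convert Set.ncard_singleton (⟨i.1 - 1, by omega⟩ : Fin n)
      ext j
      simp only [Set.mem_ofPred_eq, Set.mem_singleton_iff, Fin.ext_iff]
      omega
    · convert Set.ncard_empty (Fin n)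
      ext j
      simp only [Set.mem_ofPred_eq, Set.mem_empty_iff_false, iff_false]
      omega

theorem deg_pathGraph_add_ite_eq_one_iff {n : ℕ} {i₀ : Fin n} (h : deg (pathGraph n) i₀ ≤ 1)
    (i : Fin n) : deg (pathGraph n) i + (if i = i₀ then 1 else 0) = 1 ↔ i = i₀.rev := by
  rw [deg_pathGraph] at h ⊢
  simp only [Fin.ext_iff, Fin.val_rev]
  have := i.2
  have := i₀.2
  split_ifs at h ⊢ <;> omega

end Degrees

section Pendant

variable {V : Type*} (T : SimpleGraph V) (w : V)

theorem deg_eq_deg_induce_compSupp_add {c : (T.induce {u | u ≠ w}).ConnectedComponent} {v : V}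
    [Finite V] (hv : v ∈ compSupp T w c) :
    deg T v = deg (T.induce (compSupp T w c)) ⟨v, hv⟩ + if T.Adj v w then 1 else 0 := by
  have hinter : T.neighborSet v ∩ compSupp T w c = T.neighborSet v \ {w} := by
    ext u
    simp only [Set.mem_inter_iff, Set.mem_sdiff, Set.mem_singleton_iff, mem_neighborSet]
    exact ⟨fun ⟨hvu, hu⟩ => ⟨hvu, ne_of_mem_compSupp T w hu⟩,
      fun ⟨hvu, hu⟩ => ⟨hvu, mem_compSupp_of_adj T w hv hvu hu⟩⟩
  rw [deg_induce, hinter, deg]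
  split_ifs with hvw
  · exact (Set.ncard_sdiff_singleton_add_one hvw).symm
  · rw [Set.sdiff_singleton_eq_self (show w ∉ T.neighborSet v from hvw), add_zero]

theorem existsUnique_deg_eq_one_mem_compSupp [Finite V] (hT : T.IsTree)
    (c : (T.induce {u | u ≠ w}).ConnectedComponent)
    (hpath : IsPathGraph (T.induce (compSupp T w c)))
    (hend : ∀ v ∈ compSupp T w c, T.Adj w v →
      (T.neighborSet v ∩ compSupp T w c).ncard ≤ 1) :
    ∃! v ∈ compSupp T w c, deg T v = 1 := by
  obtain ⟨n, ⟨e⟩⟩ := hpath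
  obtain ⟨u, ⟨hu, hwu⟩, huniq⟩ := existsUnique_adj_mem_compSupp T w hT c
  have hdeg : ∀ v (hv : v ∈ compSupp T w c), deg T v =
      deg (pathGraph n) (e ⟨v, hv⟩) + if e ⟨v, hv⟩ = e ⟨u, hu⟩ then 1 else 0 := by
    intro v hv
    have hvu : T.Adj v w ↔ e ⟨v, hv⟩ = e ⟨u, hu⟩ := by
      rw [e.injective.eq_iff, Subtype.mk.injEq]
      exact ⟨fun hvw => huniq v ⟨hv, hvw.symm⟩, fun h => h ▸ hwu.symm⟩
    rw [deg_eq_deg_induce_compSupp_add T w hv, deg_iso]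
    exact congrArg _ (if_congr hvu rfl rfl)
  have hu₁ : deg (pathGraph n) (e ⟨u, hu⟩) ≤ 1 := by
    rw [deg_iso, deg_induce]
    exact hend u hu hwu
  -- the pendant vertex is the far end of the path
  refine ⟨e.symm (e ⟨u, hu⟩).rev, ⟨(e.symm _).2, ?_⟩, fun v ⟨hv, hv₁⟩ => ?_⟩
  · rw [hdeg _ (e.symm _).2, Subtype.coe_eta, e.apply_symm_apply,
      deg_pathGraph_add_ite_eq_one_iff hu₁]
  · rw [hdeg v hv, deg_pathGraph_add_ite_eq_one_iff hu₁, ← e.eq_symm_apply] at hv₁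
    rw [← hv₁]

theorem pendCount_eq_deg [Finite V] (hT : T.IsTree) (hw : deg T w ≠ 1)
    (hpaths : ∀ c : (T.induce {u | u ≠ w}).ConnectedComponent,
      IsPathGraph (T.induce (compSupp T w c)) ∧
      ∀ v ∈ compSupp T w c, T.Adj w v → (T.neighborSet v ∩ compSupp T w c).ncard ≤ 1) :
    pendCount T = deg T w := by
  rw [deg_eq_card_connectedComponent T w hT, pendCount]
  exact ncard_eq_card_connectedComponent T w (fun v hv hvw => hw (hvw ▸ hv))
    fun c => existsUnique_deg_eq_one_mem_compSupp T w hT c (hpaths c).1 (hpaths c).2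

end Pendant

section Multiplicity

variable {V : Type*} [Fintype V] (T : SimpleGraph V) (lam : ℝ) (w : V)

theorem adjM_isSymm : (adjM T).IsSymm :=
  Matrix.IsSymm.ext fun i j => by simp only [adjM, T.adj_comm]

theorem gMult_eq_finrank_eigOn : gMult T lam = finrank ℝ (eigOn (adjM T) lam Set.univ) := by
  rw [gMult, matMult, eigOn_univ]

theorem sMult_eq_finrank_eigOn (S : Set V) :
    sMult T S lam = finrank ℝ (eigOn (adjM T) lam S) := by
  rw [sMult, gMult, show adjM (T.induce S) = (adjM T).submatrix Subtype.val Subtype.val from rfl]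
  convert matMult_submatrix (adjM T) lam S

theorem adjM_eq_zero_of_mem_compSupp :
    Pairwise fun c c' : (T.induce {u | u ≠ w}).ConnectedComponent =>
      ∀ v ∈ compSupp T w c, ∀ u ∈ compSupp T w c', adjM T v u = 0 := by
  intro c c' hcc' v hv u hu
  refine if_neg fun hvu => (pairwise_disjoint_compSupp T w hcc').notMem_of_mem_right hu ?_
  exact mem_compSupp_of_adj T w hv hvu (ne_of_mem_compSupp T w hu)

theorem eigOn_compSupp_le (c : (T.induce {u | u ≠ w}).ConnectedComponent) :
    eigOn (adjM T) lam (compSupp T w c) ≤ eigOn (adjM T) lam {u | u ≠ w} :=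
  iUnion_compSupp T w ▸ eigOn_le_eigOn_iUnion _ lam (adjM_eq_zero_of_mem_compSupp T w) c

theorem finrank_eigOn_compl_eq_sum :
    finrank ℝ (eigOn (adjM T) lam {u | u ≠ w}) =
      ∑ c : (T.induce {u | u ≠ w}).ConnectedComponent,
        finrank ℝ (eigOn (adjM T) lam (compSupp T w c)) := by
  have := finrank_eigOn_iUnion _ lam (pairwise_disjoint_compSupp T w)
    (adjM_eq_zero_of_mem_compSupp T w)
  rwa [iUnion_compSupp] at this

theorem finrank_eigOn_compl_add_one (hT : T.IsTree)
    {c₁ : (T.induce {u | u ≠ w}).ConnectedComponent}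
    (hc₁ : finrank ℝ (eigOn (adjM T) lam (compSupp T w c₁)) = 0)
    (hc : ∀ c ≠ c₁, finrank ℝ (eigOn (adjM T) lam (compSupp T w c)) = 1) :
    finrank ℝ (eigOn (adjM T) lam {u | u ≠ w}) + 1 = deg T w := by
  have hcard : Fintype.card (T.induce {u | u ≠ w}).ConnectedComponent = deg T w := by
    rw [deg_eq_card_connectedComponent T w hT, Nat.card_eq_fintype_card]
  have hpos : 0 < Fintype.card (T.induce {u | u ≠ w}).ConnectedComponent :=
    Fintype.card_pos_iff.2 ⟨c₁⟩
  rw [finrank_eigOn_compl_eq_sum, ← Finset.add_sum_erase _ _ (Finset.mem_univ c₁), hc₁,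
    zero_add, Finset.sum_congr rfl fun c hc' => hc c (Finset.ne_of_mem_erase hc'),
    Finset.sum_const, smul_eq_mul, mul_one, Finset.card_erase_of_mem (Finset.mem_univ _),
    Finset.card_univ, ← hcard]
  omega

theorem gMult_add_two_eq_deg (hT : T.IsTree) (hw : 2 ≤ deg T w)
    (hone : ∃ c₁ : (T.induce {u | u ≠ w}).ConnectedComponent,
      sMult T (compSupp T w c₁) lam = 0 ∧
      ∀ c ≠ c₁, sMult T (compSupp T w c) lam = 1 ∧
        ∃ u ∈ compSupp T w c, T.Adj w u ∧ sMult T (compSupp T w c \ {u}) lam = 0) :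
    gMult T lam + 2 = deg T w := by
  obtain ⟨c₁, hc₁, hrest⟩ := hone
  simp only [sMult_eq_finrank_eigOn] at hc₁ hrest
  have hcompl := finrank_eigOn_compl_add_one T lam w hT hc₁ fun c hc => (hrest c hc).1
  obtain ⟨c₂, hc₂⟩ := Fintype.exists_ne_of_one_lt_card
    (by rw [← Nat.card_eq_fintype_card, ← deg_eq_card_connectedComponent T w hT]; omega) c₁
  obtain ⟨hdim, u, hu, hwu, hdimu⟩ := hrest c₂ hc₂
  obtain ⟨y, hy, hyu⟩ := exists_mem_eigOn_apply_ne_zero _ lam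
    (fun h => one_ne_zero (hdim.symm.trans (Submodule.finrank_eq_zero.2 h)))
    (Submodule.finrank_eq_zero.1 hdimu)
  have hyw : (adjM T *ᵥ y) w = y u := by
    refine (Finset.sum_eq_single u (fun v _ hvu => ?_) (by simp)).trans (by simp [adjM, hwu])
    by_cases hv : v ∈ compSupp T w c₂
    · have hwv : ¬ T.Adj w v := fun hwv =>
        hvu (eq_of_adj_of_mem_compSupp T w hT.2 hv hu hwv hwu)
      simp [adjM, hwv]
    · simp [hy.1 v hv]
  have := finrank_eigOn_univ_add_one (adjM_isSymm T) (eigOn_compSupp_le T lam w c₂ hy)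
    (hyw ▸ hyu)
  rw [gMult_eq_finrank_eigOn]
  omega

end Multiplicity

theorem stmt14_general
    (lam : ℝ)
    {V : Type*} [Fintype V] (T : SimpleGraph V) (hT : T.IsTree)
    (w : V) (hw : 4 ≤ deg T w)
    (hpaths : ∀ c : (T.induce {u | u ≠ w}).ConnectedComponent,
      IsPathGraph (T.induce (compSupp T w c)) ∧
      ∀ v ∈ compSupp T w c, T.Adj w v →
        (T.neighborSet v ∩ compSupp T w c).ncard ≤ 1)
    (hone : ∃ c₁ : (T.induce {u | u ≠ w}).ConnectedComponent,
      sMult T (compSupp T w c₁) lam = 0 ∧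
      ∀ c ≠ c₁, sMult T (compSupp T w c) lam = 1 ∧
        ∃ u ∈ compSupp T w c, T.Adj w u ∧
          sMult T (compSupp T w c \ {u}) lam = 0) :
    gMult T lam + 2 = deg T w ∧ pendCount T = deg T w :=
  ⟨gMult_add_two_eq_deg T lam w hT (by omega) hone, pendCount_eq_deg T w hT (by omega) hpaths⟩

/-- Base case `γ(T) = 1` of the 'if' direction of Theorem 1.4. -/
theorem stmt14 (i m : ℕ) (hi1 : 1 ≤ i) (him : i ≤ m) (hco : Nat.Coprime i (m + 1))
    (lam : ℝ) (hlam : lam = 2 * Real.cos (i * Real.pi / (m + 1)))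
    {V : Type*} [Fintype V] (T : SimpleGraph V) (hT : T.IsTree)
    (w : V) (hw : 4 ≤ deg T w) (huniq : ∀ u : V, 3 ≤ deg T u → u = w)
    (hpaths : ∀ c : (T.induce {u | u ≠ w}).ConnectedComponent,
      IsPathGraph (T.induce (compSupp T w c)) ∧
      ∀ v ∈ compSupp T w c, T.Adj w v →
        (T.neighborSet v ∩ compSupp T w c).ncard ≤ 1)
    (hone : ∃ c₁ : (T.induce {u | u ≠ w}).ConnectedComponent,
      sMult T (compSupp T w c₁) lam = 0 ∧
      ∀ c ≠ c₁, sMult T (compSupp T w c) lam = 1 ∧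
        ∃ u ∈ compSupp T w c, T.Adj w u ∧
          sMult T (compSupp T w c \ {u}) lam = 0) :
    gMult T lam + 2 = deg T w ∧ pendCount T = deg T w :=
  stmt14_general lam T hT w hw hpaths hone
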